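/- Let R be a ring, let M be a Noetherian R-module, let F, G : ModuleCat R ⥤ ModuleCat R be additive functors such that F preserves epimorphisms, and let α : F ⟶ G be a natural transformation. Then there exists a submodule N of M such that the component of α at N (regarded as an object of ModuleCat R) is zero, and every submodule N' of M at which the component of α is zero satisfies N' ≤ N. -/

import Mathlib

/-!
The submodules annihilated by `α` contain `⊥` and are closed under `⊔`: additivity of `F` makes
`α` vanish on `A ⊞ B`, and since `F` preserves the epimorphism `A ⊞ B ⟶ A ⊔ B`, naturality makes
it vanish on `A ⊔ B`. In a Noetherian module a nonempty sup-closed family of submodules contains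
its supremum, which is the maximal annihilated submodule.
-/

open CategoryTheory Limits

universe u

namespace CategoryTheory.NatTrans

variable {C D : Type*} [Category C] [Category D] {F G : C ⥤ D} (α : F ⟶ G)

lemma app_eq_zero_of_isZero [HasZeroMorphisms C] [HasZeroMorphisms D] [F.PreservesZeroMorphisms]
    {X : C} (hX : IsZero X) : α.app X = 0 :=
  (F.map_isZero hX).eq_of_src _ _

lemma app_eq_zero_of_epi [HasZeroMorphisms D] [F.PreservesEpimorphisms] {X Y : C} (p : X ⟶ Y)
    [Epi p] (hX : α.app X = 0) : α.app Y = 0 :=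
  zero_of_epi_comp (F.map p) (by rw [α.naturality, hX, zero_comp])

lemma app_biprod_eq_zero [Preadditive C] [Preadditive D] [F.Additive] {X Y : C}
    [HasBinaryBiproduct X Y] (hX : α.app X = 0) (hY : α.app Y = 0) : α.app (X ⊞ Y) = 0 :=
  calc α.app (X ⊞ Y) = F.map (biprod.fst ≫ biprod.inl + biprod.snd ≫ biprod.inr) ≫ α.app _ := by
        simp
    _ = F.map biprod.fst ≫ α.app X ≫ G.map biprod.inl +
          F.map biprod.snd ≫ α.app Y ≫ G.map biprod.inr := by
        simp only [F.map_add, F.map_comp, Preadditive.add_comp, Category.assoc, α.naturality]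
    _ = 0 := by simp [hX, hY]

end CategoryTheory.NatTrans

namespace ModuleCat

variable {R : Type*} [Ring R] {M : Type u} [AddCommGroup M] [Module R M]

instance epi_biprod_desc_inclusion_sup (A B : Submodule R M) :
    Epi (biprod.desc (ofHom (Submodule.inclusion le_sup_left))
      (ofHom (Submodule.inclusion le_sup_right)) : of R A ⊞ of R B ⟶ of R ↥(A ⊔ B)) := by
  refine (epi_iff_surjective _).2 fun ⟨x, hx⟩ => ?_
  obtain ⟨a, ha, b, hb, rfl⟩ := Submodule.mem_sup.mp hx
  refine ⟨(biprod.inl : of R A ⟶ _).hom ⟨a, ha⟩ + (biprod.inr : of R B ⟶ _).hom ⟨b, hb⟩, ?_⟩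
  rw [map_add, ← ConcreteCategory.comp_apply, ← ConcreteCategory.comp_apply]
  simp only [biprod.inl_desc, biprod.inr_desc]
  rfl

lemma supClosed_setOf_app_of_submodule_eq_zero {F G : ModuleCat.{u} R ⥤ ModuleCat.{u} R}
    [F.Additive] [F.PreservesEpimorphisms] (α : F ⟶ G) :
    SupClosed {N : Submodule R M | α.app (of R N) = 0} :=
  fun A hA B hB => α.app_eq_zero_of_epi
    (biprod.desc (ofHom (Submodule.inclusion (le_sup_left : A ≤ A ⊔ B)))
      (ofHom (Submodule.inclusion le_sup_right))) (α.app_biprod_eq_zero hA hB)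

end ModuleCat

theorem exists_maximal_annihilated_submodule_general (R : Type u) [Ring R]
    (M : Type u) [AddCommGroup M] [Module R M] [IsNoetherian R M]
    (F G : ModuleCat.{u} R ⥤ ModuleCat.{u} R) [F.Additive]
    [F.PreservesEpimorphisms] (α : F ⟶ G) :
    ∃ N : Submodule R M, α.app (ModuleCat.of R N) = 0 ∧
      ∀ N' : Submodule R M, α.app (ModuleCat.of R N') = 0 → N' ≤ N := by
  set S := {N : Submodule R M | α.app (ModuleCat.of R N) = 0}
  have hbot : ⊥ ∈ S := α.app_eq_zero_of_isZero (ModuleCat.isZero_of_subsingleton _)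
  exact ⟨sSup S, CompleteLattice.WellFoundedGT.isSupClosedCompact _ inferInstance S ⟨⊥, hbot⟩
    (ModuleCat.supClosed_setOf_app_of_submodule_eq_zero α), fun _ hN' => le_sSup hN'⟩

/-- Every Noetherian module `M` has a unique maximal submodule annihilated by a natural
transformation `α : F ⟶ G` between additive endofunctors of `ModuleCat R`, provided `F`
preserves epimorphisms. -/
theorem exists_maximal_annihilated_submodule (R : Type u) [Ring R]
    (M : Type u) [AddCommGroup M] [Module R M] [IsNoetherian R M]
    (F G : ModuleCat.{u} R ⥤ ModuleCat.{u} R) [F.Additive] [G.Additive]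
    [F.PreservesEpimorphisms] (α : F ⟶ G) :
    ∃ N : Submodule R M, α.app (ModuleCat.of R N) = 0 ∧
      ∀ N' : Submodule R M, α.app (ModuleCat.of R N') = 0 → N' ≤ N :=
  exists_maximal_annihilated_submodule_general R M F G α
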